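/- arXiv:1811.03475 — 3 statements merged into one kernel-verified Lean document; each statement's English description precedes it below -/
import Mathlib

section
/- For every n ∈ ℕ₀ and all x > 0, the iterated Laguerre derivative satisfies (β^n ρ_0)(x) = ρ_0(x) and (β^n ρ_1)(x) = ρ_1(x) − n ρ_0(x), where β is applied n times. -/
open MeasureTheory Real Set

/-- The scaled Macdonald function `ρ_ν(x) = ∫₀^∞ t^(ν-1) e^(-t - x/t) dt`. -/
noncomputable def rho (ν : ℝ) (x : ℝ) : ℝ :=
  ∫ t in Ioi (0:ℝ), t ^ (ν - 1) * Real.exp (-t - x / t)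

/-- The Laguerre derivative operator `β f = D (x · D f)`. -/
noncomputable def laguerreDeriv (f : ℝ → ℝ) : ℝ → ℝ :=
  fun x => deriv (fun y : ℝ => y * deriv f y) x

/-!
Differentiating under the integral sign gives `ρ_ν' = -ρ_{ν-1}`, and integrating
`d/dt (t^μ e^{-t-x/t}) = (μ t^{μ-1} - t^μ + x t^{μ-2}) e^{-t-x/t}` over `(0, ∞)` gives the
recurrence `x ρ_{μ-1} = ρ_{μ+1} - μ ρ_μ`. Together they give `(x ρ_ν)' = (ν + 1) ρ_ν - ρ_{ν+1}`,
hence `β (a ρ_1 + b ρ_0) = a ρ_1 + (b - a) ρ_0`: on `(0, ∞)`, `β` acts on the span of `ρ_1, ρ_0`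
as a unipotent matrix, and the claim follows by induction on `n`.
-/

open Filter Topology

-- `rho ν x` unfolds to `∫ t in Ioi 0, rhoIntegrand (ν - 1) x t`.
noncomputable def rhoIntegrand (s x t : ℝ) : ℝ := t ^ s * exp (-t - x / t)

theorem continuousOn_rhoIntegrand (s x : ℝ) : ContinuousOn (rhoIntegrand s x) (Ioi 0) := by
  unfold rhoIntegrand
  fun_prop (disch := exact fun t ht => ne_of_gt ht)

theorem rhoIntegrand_pos (s x : ℝ) {t : ℝ} (ht : 0 < t) : 0 < rhoIntegrand s x t := by
  unfold rhoIntegrand; positivity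

theorem rhoIntegrand_antitone (s : ℝ) {t : ℝ} (ht : 0 < t) :
    Antitone fun x => rhoIntegrand s x t := fun x y hxy => by
  simp only [rhoIntegrand]
  gcongr

-- Trading `e^{-x/t}` for `t^k` dominates the integrand near `0` by a Gamma integrand.
theorem rhoIntegrand_le (s : ℝ) {x t : ℝ} (k : ℕ) (hx : 0 < x) (ht : 0 < t) :
    rhoIntegrand s x t ≤ k.factorial / x ^ k * (t ^ (s + k) * exp (-t)) := by
  have hexp : exp (-(x / t)) ≤ k.factorial * t ^ k / x ^ k := by
    rw [exp_neg, inv_le_comm₀ (exp_pos _) (by positivity), inv_div]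
    calc x ^ k / (k.factorial * t ^ k) = (x / t) ^ k / k.factorial := by rw [div_pow]; ring
      _ ≤ exp (x / t) := pow_div_factorial_le_exp (x / t) (by positivity) k
  calc rhoIntegrand s x t = t ^ s * exp (-t) * exp (-(x / t)) := by
        rw [rhoIntegrand, sub_eq_add_neg, exp_add, mul_assoc]
    _ ≤ t ^ s * exp (-t) * (k.factorial * t ^ k / x ^ k) := by gcongr
    _ = k.factorial / x ^ k * (t ^ (s + k) * exp (-t)) := by
        rw [rpow_add_natCast ht.ne']; ring

theorem integrableOn_rhoIntegrand (s : ℝ) {x : ℝ} (hx : 0 < x) :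
    IntegrableOn (rhoIntegrand s x) (Ioi 0) := by
  obtain ⟨k, hk⟩ := exists_nat_gt (-s)
  have hgamma := (GammaIntegral_convergent (s := s + k + 1) (by linarith)).const_mul
    (k.factorial / x ^ k)
  refine hgamma.mono' ((continuousOn_rhoIntegrand s x).aestronglyMeasurable measurableSet_Ioi) ?_
  filter_upwards [ae_restrict_mem measurableSet_Ioi] with t (ht : 0 < t)
  rw [norm_of_nonneg (rhoIntegrand_pos s x ht).le, add_sub_cancel_right, mul_comm (exp _)]
  exact rhoIntegrand_le s k hx ht

theorem tendsto_rhoIntegrand_nhdsGT_zero (s : ℝ) {x : ℝ} (hx : 0 < x) :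
    Tendsto (rhoIntegrand s x) (𝓝[>] 0) (𝓝 0) := by
  obtain ⟨k, hk⟩ := exists_nat_gt (-s)
  set bound := fun t => k.factorial / x ^ k * (t ^ (s + k) * exp (-t))
  have hcont : ContinuousAt bound 0 := by fun_prop (disch := right; linarith)
  have hbound : Tendsto bound (𝓝[>] 0) (𝓝 0) := by
    simpa [bound, zero_rpow (by linarith : s + k ≠ 0)] using
      hcont.tendsto.mono_left nhdsWithin_le_nhds
  refine squeeze_zero' ?_ ?_ hbound
  · filter_upwards [self_mem_nhdsWithin] with t ht using (rhoIntegrand_pos s x ht).le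
  · filter_upwards [self_mem_nhdsWithin] with t ht using rhoIntegrand_le s k hx ht

theorem tendsto_rhoIntegrand_atTop (s : ℝ) {x : ℝ} (hx : 0 ≤ x) :
    Tendsto (rhoIntegrand s x) atTop (𝓝 0) := by
  refine squeeze_zero' ?_ ?_ (tendsto_rpow_mul_exp_neg_mul_atTop_nhds_zero s 1 one_pos)
  · filter_upwards [eventually_gt_atTop 0] with t ht using (rhoIntegrand_pos s x ht).le
  · filter_upwards [eventually_gt_atTop 0] with t ht
    rw [rhoIntegrand, neg_one_mul]
    gcongr
    exact sub_le_self _ (by positivity)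

theorem hasDerivAt_rhoIntegrand_param (s x : ℝ) {t : ℝ} (ht : t ≠ 0) :
    HasDerivAt (fun y => rhoIntegrand s y t) (-rhoIntegrand (s - 1) x t) x := by
  have h := (((hasDerivAt_id' x).div_const t).const_sub (-t)).exp.const_mul (t ^ s)
  refine h.congr_deriv ?_
  rw [rhoIntegrand, rpow_sub_one ht]
  field_simp

theorem hasDerivAt_rhoIntegrand (s x : ℝ) {t : ℝ} (ht : t ≠ 0) :
    HasDerivAt (rhoIntegrand s x)
      (s * rhoIntegrand (s - 1) x t - rhoIntegrand s x t + x * rhoIntegrand (s - 1 - 1) x t)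
      t := by
  have h := (hasDerivAt_rpow_const (p := s) (Or.inl ht)).mul
    (((hasDerivAt_id' t).neg.sub ((hasDerivAt_const t x).div (hasDerivAt_id' t) ht)).exp)
  refine h.congr_deriv ?_
  simp only [rhoIntegrand, rpow_sub_one ht, Pi.sub_apply, Pi.neg_apply, Pi.div_apply]
  field_simp
  ring

theorem hasDerivAt_rho (ν : ℝ) {x : ℝ} (hx : 0 < x) : HasDerivAt (rho ν) (-rho (ν - 1) x) x := by
  have hmeas (s y : ℝ) : AEStronglyMeasurable (rhoIntegrand s y) (volume.restrict (Ioi 0)) :=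
    (continuousOn_rhoIntegrand s y).aestronglyMeasurable measurableSet_Ioi
  have hx2 : 0 < x / 2 := half_pos hx
  have hdiff := hasDerivAt_integral_of_dominated_loc_of_deriv_le
    (F := fun y t => rhoIntegrand (ν - 1) y t) (F' := fun y t => -rhoIntegrand (ν - 1 - 1) y t)
    (bound := rhoIntegrand (ν - 1 - 1) (x / 2))
    (Metric.ball_mem_nhds x hx2) (.of_forall fun y => hmeas (ν - 1) y)
    (integrableOn_rhoIntegrand (ν - 1) hx) (hmeas _ x).neg ?_
    (integrableOn_rhoIntegrand _ hx2) ?_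
  · simp only [integral_neg] at hdiff
    exact hdiff.2
  · filter_upwards [ae_restrict_mem measurableSet_Ioi] with t (ht : 0 < t) y hy
    rw [norm_neg, norm_of_nonneg (rhoIntegrand_pos _ _ ht).le]
    refine rhoIntegrand_antitone _ ht ?_
    rw [Metric.mem_ball, Real.dist_eq, abs_lt] at hy
    linarith
  · filter_upwards [ae_restrict_mem measurableSet_Ioi] with t (ht : 0 < t) y _
    exact hasDerivAt_rhoIntegrand_param _ y ht.ne'

-- Unlike `integral_Ioi_of_hasDerivAt_of_tendsto`, no continuity at `a` itself is asked for: at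
-- `t = 0` the integrand takes the junk value `0 ^ s`.
theorem integral_Ioi_of_hasDerivAt_of_tendsto_nhdsGT {f f' : ℝ → ℝ} {a m n : ℝ}
    (hderiv : ∀ x ∈ Ioi a, HasDerivAt f (f' x) x) (hf' : IntegrableOn f' (Ioi a))
    (hbot : Tendsto f (𝓝[>] a) (𝓝 m)) (htop : Tendsto f atTop (𝓝 n)) :
    ∫ x in Ioi a, f' x = n - m := by
  simpa using integral_Ioi_deriv_mul_eq_sub (v := fun _ => 1) (v' := fun _ => 0) hderiv
    (fun x _ => hasDerivAt_const x 1) (by simpa [Pi.mul_def, Pi.add_def] using hf')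
    (by simpa [Pi.mul_def] using hbot) (by simpa [Pi.mul_def] using htop)

theorem rho_add_one (ν x : ℝ) : rho (ν + 1) x = ∫ t in Ioi 0, rhoIntegrand ν x t := by
  simp only [rho, add_sub_cancel_right, rhoIntegrand]

theorem mul_rho_sub_one (μ : ℝ) {x : ℝ} (hx : 0 < x) :
    x * rho (μ - 1) x = rho (μ + 1) x - μ * rho μ x := by
  have i1 := (integrableOn_rhoIntegrand (μ - 1) hx).const_mul μ
  have i2 := integrableOn_rhoIntegrand μ hx
  have i3 := (integrableOn_rhoIntegrand (μ - 1 - 1) hx).const_mul x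
  have i12 : IntegrableOn (fun t => μ * rhoIntegrand (μ - 1) x t - rhoIntegrand μ x t) (Ioi 0) :=
    i1.sub i2
  have hftc := integral_Ioi_of_hasDerivAt_of_tendsto_nhdsGT
    (fun t ht => hasDerivAt_rhoIntegrand μ x (ne_of_gt ht)) (i12.add i3)
    (tendsto_rhoIntegrand_nhdsGT_zero μ hx) (tendsto_rhoIntegrand_atTop μ hx.le)
  rw [integral_add i12 i3, integral_sub i1 i2, integral_const_mul, integral_const_mul,
    ← rho_add_one μ, sub_self] at hftc
  change μ * rho μ x - rho (μ + 1) x + x * rho (μ - 1) x = 0 at hftc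
  linarith

theorem hasDerivAt_id_mul_rho (ν : ℝ) {x : ℝ} (hx : 0 < x) :
    HasDerivAt (fun y => y * rho ν y) ((ν + 1) * rho ν x - rho (ν + 1) x) x := by
  refine ((hasDerivAt_id' x).mul (hasDerivAt_rho ν hx)).congr_deriv ?_
  linear_combination -(mul_rho_sub_one ν hx)

theorem laguerreDeriv_eq_of_hasDerivAt {f f' : ℝ → ℝ} {x L : ℝ}
    (hf : ∀ᶠ y in 𝓝 x, HasDerivAt f (f' y) y) (hL : HasDerivAt (fun y => y * f' y) L x) :
    laguerreDeriv f x = L :=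
  (hL.congr_of_eventuallyEq (hf.mono fun y hy => by rw [hy.deriv])).deriv

theorem Filter.EventuallyEq.laguerreDeriv_eq {f g : ℝ → ℝ} {x : ℝ} (h : f =ᶠ[𝓝 x] g) :
    laguerreDeriv f x = laguerreDeriv g x := by
  refine Filter.EventuallyEq.deriv_eq ?_
  filter_upwards [h.deriv] with y hy
  rw [hy]

theorem laguerreDeriv_rho_one_add_rho_zero (a b : ℝ) {x : ℝ} (hx : 0 < x) :
    laguerreDeriv (fun y => a * rho 1 y + b * rho 0 y) x = a * rho 1 x + (b - a) * rho 0 x := by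
  refine laguerreDeriv_eq_of_hasDerivAt (f' := fun y => -(a * rho 0 y + b * rho (-1) y)) ?_ ?_
  · filter_upwards [Ioi_mem_nhds hx] with y (hy : 0 < y)
    refine (((hasDerivAt_rho 1 hy).const_mul a).add
      ((hasDerivAt_rho 0 hy).const_mul b)).congr_deriv ?_
    norm_num
    ring
  · have h := (((hasDerivAt_id_mul_rho 0 hx).const_mul a).fun_add
      ((hasDerivAt_id_mul_rho (-1) hx).const_mul b)).fun_neg
    refine (h.congr_of_eventuallyEq (.of_forall fun y => by ring)).congr_deriv ?_
    norm_num
    ring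

theorem eqOn_iterate_laguerreDeriv_rho_one_add_rho_zero (a b : ℝ) (n : ℕ) :
    EqOn (laguerreDeriv^[n] fun y => a * rho 1 y + b * rho 0 y)
      (fun y => a * rho 1 y + (b - n * a) * rho 0 y) (Ioi 0) := by
  induction n with
  | zero => intro y _; simp
  | succ n ih =>
    intro y (hy : 0 < y)
    rw [Function.iterate_succ_apply', (ih.eventuallyEq_of_mem (Ioi_mem_nhds hy)).laguerreDeriv_eq,
      laguerreDeriv_rho_one_add_rho_zero _ _ hy]
    push_cast
    ring

theorem iterated_laguerreDeriv_rho (n : ℕ) (x : ℝ) (hx : 0 < x) :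
    (laguerreDeriv^[n] (rho 0)) x = rho 0 x ∧
      (laguerreDeriv^[n] (rho 1)) x = rho 1 x - n * rho 0 x := by
  constructor
  · simpa using eqOn_iterate_laguerreDeriv_rho_one_add_rho_zero 0 1 n hx
  · simpa [sub_eq_add_neg] using eqOn_iterate_laguerreDeriv_rho_one_add_rho_zero 1 0 n hx
end

section
/- For every ν > 0 and every x > 0, the scaled Macdonald function ρ_ν is the Riemann–Liouville right-sided fractional integral of order ν of ρ_0: ρ_ν(x) = (1/Γ(ν)) ∫_x^∞ (t − x)^{ν−1} ρ_0(t) dt. -/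
open MeasureTheory Real Set

/-!
Writing `ρ₀(t) = ∫₀^∞ s⁻¹ e^(-s - t/s) ds` and exchanging the order of integration (Fubini; the
integrand is nonnegative and its iterated integral is finite), the inner integral is a shifted
Gamma integral, `∫ₓ^∞ (t - x)^(ν-1) e^(-t/s) dt = Γ(ν) s^ν e^(-x/s)`, so the double integral
collapses to `Γ(ν) ∫₀^∞ s^(ν-1) e^(-s - x/s) ds = Γ(ν) ρ_ν(x)`.
-/

section Translation

variable {E : Type*} [NormedAddCommGroup E]

theorem integrableOn_Ioi_comp_add_right_iff (f : ℝ → E) (a : ℝ) :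
    IntegrableOn (fun t => f (t + a)) (Ioi 0) ↔ IntegrableOn f (Ioi a) := by
  simpa [preimage_add_const_Ioi, Function.comp_def] using
    (measurePreserving_add_right volume a).integrableOn_comp_preimage
      (measurableEmbedding_addRight a) (f := f) (s := Ioi a)

theorem integral_Ioi_comp_add_right [NormedSpace ℝ E] (f : ℝ → E) (a : ℝ) :
    ∫ t in Ioi 0, f (t + a) = ∫ t in Ioi a, f t := by
  simpa [preimage_add_const_Ioi] using
    (measurePreserving_add_right volume a).setIntegral_preimage_emb
      (measurableEmbedding_addRight a) f (Ioi a)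

end Translation

section GammaShift

variable {ν s : ℝ}

lemma sub_rpow_mul_exp_neg_div_add (hs : s ≠ 0) (x t : ℝ) :
    (t + x - x) ^ (ν - 1) * exp (-((t + x) / s))
      = t ^ (ν - 1) * exp (-(s⁻¹ * t)) * exp (-(x / s)) := by
  rw [add_sub_cancel_right, mul_assoc, ← exp_add]
  congr 3
  field_simp
  ring

lemma integrableOn_Ioi_sub_rpow_mul_exp_neg_div (hν : 0 < ν) (hs : 0 < s) (x : ℝ) :
    IntegrableOn (fun t => (t - x) ^ (ν - 1) * exp (-(t / s))) (Ioi x) := by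
  rw [← integrableOn_Ioi_comp_add_right_iff]
  simp only [sub_rpow_mul_exp_neg_div_add hs.ne']
  have h :=
    integrableOn_rpow_mul_exp_neg_mul_rpow (by linarith : -1 < ν - 1) one_pos (inv_pos.2 hs)
  simp only [rpow_one, neg_mul] at h
  exact h.mul_const _

lemma integral_Ioi_sub_rpow_mul_exp_neg_div (hν : 0 < ν) (hs : 0 < s) (x : ℝ) :
    ∫ t in Ioi x, (t - x) ^ (ν - 1) * exp (-(t / s)) = s ^ ν * Gamma ν * exp (-(x / s)) := by
  rw [← integral_Ioi_comp_add_right]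
  simp only [sub_rpow_mul_exp_neg_div_add hs.ne']
  rw [integral_mul_const, integral_rpow_mul_exp_neg_mul_Ioi hν (inv_pos.2 hs), one_div, inv_inv]

end GammaShift

lemma integrableOn_rpow_mul_exp_neg_sub_div {ν x : ℝ} (hν : -1 < ν) (hx : 0 ≤ x) :
    IntegrableOn (fun s => s ^ ν * exp (-s - x / s)) (Ioi 0) := by
  refine (GammaIntegral_convergent (by linarith : 0 < ν + 1)).mono' (by fun_prop) ?_
  filter_upwards [ae_restrict_mem measurableSet_Ioi] with s (hs : 0 < s)
  rw [norm_of_nonneg (by positivity), add_sub_cancel_right, mul_comm]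
  gcongr
  linarith [div_nonneg hx hs.le]

lemma sub_rpow_mul_inv_mul_exp_eq (ν x s t : ℝ) :
    (t - x) ^ (ν - 1) * (s⁻¹ * exp (-s - t / s))
      = (t - x) ^ (ν - 1) * exp (-(t / s)) * (s⁻¹ * exp (-s)) := by
  rw [sub_eq_add_neg (-s), exp_add]
  ring

section Kernel

variable {ν x s : ℝ}

lemma integrableOn_Ioi_sub_rpow_mul_inv_mul_exp (hν : 0 < ν) (hs : 0 < s) (x : ℝ) :
    IntegrableOn (fun t => (t - x) ^ (ν - 1) * (s⁻¹ * exp (-s - t / s))) (Ioi x) := by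
  simp only [sub_rpow_mul_inv_mul_exp_eq]
  exact (integrableOn_Ioi_sub_rpow_mul_exp_neg_div hν hs x).mul_const _

lemma integral_Ioi_sub_rpow_mul_inv_mul_exp (hν : 0 < ν) (hs : 0 < s) (x : ℝ) :
    ∫ t in Ioi x, (t - x) ^ (ν - 1) * (s⁻¹ * exp (-s - t / s))
      = Gamma ν * (s ^ (ν - 1) * exp (-s - x / s)) := by
  simp only [sub_rpow_mul_inv_mul_exp_eq]
  rw [integral_mul_const, integral_Ioi_sub_rpow_mul_exp_neg_div hν hs, rpow_sub_one hs.ne',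
    sub_eq_neg_add, exp_add]
  field_simp

lemma integrable_prod_sub_rpow_mul_inv_mul_exp (hν : 0 < ν) (hx : 0 ≤ x) :
    Integrable (Function.uncurry fun s t => (t - x) ^ (ν - 1) * (s⁻¹ * exp (-s - t / s)))
      ((volume.restrict (Ioi 0)).prod (volume.restrict (Ioi x))) := by
  rw [integrable_prod_iff (Measurable.aestronglyMeasurable (by fun_prop))]
  refine ⟨?_, ?_⟩
  · filter_upwards [ae_restrict_mem measurableSet_Ioi] with s (hs : 0 < s)
    exact integrableOn_Ioi_sub_rpow_mul_inv_mul_exp hν hs x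
  · refine ((integrableOn_rpow_mul_exp_neg_sub_div (ν := ν - 1) (by linarith) hx).const_mul
      (Gamma ν)).congr ?_
    filter_upwards [ae_restrict_mem measurableSet_Ioi] with s (hs : 0 < s)
    rw [← integral_Ioi_sub_rpow_mul_inv_mul_exp hν hs]
    refine setIntegral_congr_fun measurableSet_Ioi fun t (ht : x < t) => ?_
    have : 0 ≤ (t - x) ^ (ν - 1) := rpow_nonneg (by linarith) _
    exact (norm_of_nonneg (by positivity)).symm

end Kernel

lemma rho_zero (x : ℝ) : rho 0 x = ∫ s in Ioi 0, s⁻¹ * exp (-s - x / s) := by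
  simp only [rho, zero_sub, rpow_neg_one]

theorem rho_eq_fractional_integral (ν : ℝ) (hν : 0 < ν) (x : ℝ) (hx : 0 < x) :
    rho ν x = (1 / Real.Gamma ν) * ∫ t in Ioi x, (t - x) ^ (ν - 1) * rho 0 t := by
  have hΓ : Gamma ν ≠ 0 := (Gamma_pos_of_pos hν).ne'
  calc rho ν x = 1 / Gamma ν * (Gamma ν * rho ν x) := by field_simp
    _ = 1 / Gamma ν *
          ∫ s in Ioi 0, ∫ t in Ioi x, (t - x) ^ (ν - 1) * (s⁻¹ * exp (-s - t / s)) := by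
      rw [rho, ← integral_const_mul]
      congr 1
      exact (setIntegral_congr_fun measurableSet_Ioi fun s hs =>
        integral_Ioi_sub_rpow_mul_inv_mul_exp hν hs x).symm
    _ = 1 / Gamma ν * ∫ t in Ioi x, (t - x) ^ (ν - 1) * rho 0 t := by
      simp only [integral_integral_swap (integrable_prod_sub_rpow_mul_inv_mul_exp hν hx.le),
        rho_zero, integral_const_mul]
end

section
/- Theorem 1 (composition orthogonality in the sense of Laguerre): let ν ≥ 0, α > −1, and let (P_n)_{n∈ℕ₀} be a sequence of real polynomials with deg P_n = n. Then the Prudnikov orthogonality ∫₀^∞ P_n(x) P_m(x) x^α ρ_ν(x) dx = δ_{n,m} holds for all n, m ∈ ℕ₀ if and only if the composition orthogonality ∫₀^∞ t^ν e^{-t} · ((P_m · P_n)(θ){t^α})(t) dt = δ_{n,m} / Γ(1+α) holds for all n, m ∈ ℕ₀. -/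
/-!
Both sides are linear in the polynomial, so it suffices to compare monomials. By Tonelli,
integrating first in `x` with `∫₀^∞ x^β e^{-x/t} dx = Γ(β+1) t^{β+1}`, the Mellin transform of
`ρ_ν` is `∫₀^∞ x^β ρ_ν(x) dx = Γ(β+1) Γ(ν+β+1)`, while
`∫₀^∞ t^ν e^{-t} (1+α)_j t^{α+j} dt = (1+α)_j Γ(ν+α+j+1)`. Since `Γ(α+j+1) = Γ(1+α) (1+α)_j`,
this gives `∫ Q(x) x^α ρ_ν(x) dx = Γ(1+α) ∫ t^ν e^{-t} Q(θ){t^α} dt` for every polynomial `Q`,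
which is applied to `Q = P_m P_n`.
-/

open MeasureTheory Real Set

/-- For a polynomial `p(x) = Σ_j a_j x^j`, the function `p(θ){t^α} = Σ_j a_j (1+α)_j t^{α+j}`,
where `(1+α)_j = Γ(1+α+j)/Γ(1+α)` is the Pochhammer symbol. -/
noncomputable def polyThetaApply (p : Polynomial ℝ) (α : ℝ) (t : ℝ) : ℝ :=
  ∑ j ∈ Finset.range (p.natDegree + 1),
    p.coeff j * (Real.Gamma (1 + α + j) / Real.Gamma (1 + α)) * t ^ (α + (j : ℝ))

lemma setLIntegral_ofReal_eq_ofReal_setIntegral {X : Type*} [MeasurableSpace X] {μ : Measure X}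
    {s : Set X} (hs : MeasurableSet s) {f : X → ℝ} (hf : IntegrableOn f s μ)
    (hf_nonneg : ∀ x ∈ s, 0 ≤ f x) :
    ∫⁻ x in s, ENNReal.ofReal (f x) ∂μ = ENNReal.ofReal (∫ x in s, f x ∂μ) :=
  (ofReal_integral_eq_lintegral_ofReal hf (ae_restrict_of_forall_mem hs hf_nonneg)).symm

lemma exp_neg_div_le_factorial_mul {x t : ℝ} (hx : 0 < x) (ht : 0 < t) (k : ℕ) :
    exp (-(x / t)) ≤ k.factorial * (t / x) ^ k := by
  have h := pow_div_factorial_le_exp _ (div_pos hx ht).le k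
  rw [exp_neg, inv_le_comm₀ (exp_pos _) (by positivity)]
  calc ((k.factorial : ℝ) * (t / x) ^ k)⁻¹ = (x / t) ^ k / k.factorial := by
        rw [mul_inv, div_pow, inv_div, div_pow]; ring
    _ ≤ exp (x / t) := h

lemma integrableOn_rho_integrand (ν : ℝ) {x : ℝ} (hx : 0 < x) :
    IntegrableOn (fun t ↦ t ^ (ν - 1) * exp (-t - x / t)) (Ioi 0) := by
  -- `exp (-(x / t))` decays faster than any power of `t` as `t → 0⁺`.
  obtain ⟨k, hk⟩ := exists_nat_gt (-ν)
  have hdom := (GammaIntegral_convergent (s := ν + k) (by linarith)).const_mul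
    (k.factorial / x ^ k)
  refine hdom.mono' (by fun_prop) (ae_restrict_of_forall_mem measurableSet_Ioi
    fun t (ht : 0 < t) ↦ ?_)
  rw [norm_of_nonneg (by positivity), sub_eq_add_neg (-t), exp_add]
  calc t ^ (ν - 1) * (exp (-t) * exp (-(x / t)))
      ≤ t ^ (ν - 1) * (exp (-t) * (k.factorial * (t / x) ^ k)) := by
        gcongr; exact exp_neg_div_le_factorial_mul hx ht k
    _ = k.factorial / x ^ k * (exp (-t) * t ^ (ν + k - 1)) := by
        rw [show ν + k - 1 = (ν - 1) + k by ring, rpow_add ht, rpow_natCast, div_pow]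
        field_simp

lemma rho_nonneg (ν : ℝ) (x : ℝ) : 0 ≤ rho ν x :=
  setIntegral_nonneg measurableSet_Ioi fun t (ht : 0 < t) ↦ by positivity

lemma stronglyMeasurable_rho (ν : ℝ) : StronglyMeasurable (rho ν) :=
  (show Measurable fun p : ℝ × ℝ ↦ p.2 ^ (ν - 1) * exp (-p.2 - p.1 / p.2) by fun_prop)
    |>.stronglyMeasurable.integral_prod_right'

lemma integral_rpow_mul_exp_neg_div {β t : ℝ} (hβ : -1 < β) (ht : 0 < t) :
    ∫ x in Ioi 0, x ^ β * exp (-(x / t)) = t ^ (β + 1) * Gamma (β + 1) := by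
  have h := integral_rpow_mul_exp_neg_mul_Ioi (a := β + 1) (r := t⁻¹) (by linarith)
    (inv_pos.mpr ht)
  simp only [add_sub_cancel_right, one_div, inv_inv] at h
  simpa only [div_eq_inv_mul] using h

lemma integrableOn_rpow_mul_exp_neg_div {β t : ℝ} (hβ : -1 < β) (ht : 0 < t) :
    IntegrableOn (fun x ↦ x ^ β * exp (-(x / t))) (Ioi 0) := by
  have h := integrableOn_rpow_mul_exp_neg_mul_rpow hβ one_pos (inv_pos.mpr ht)
  simpa only [rpow_one, neg_mul, div_eq_inv_mul] using h

lemma lintegral_rpow_mul_rho {ν β : ℝ} (hβ : -1 < β) (hνβ : 0 < ν + β + 1) :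
    ∫⁻ x in Ioi 0, ENNReal.ofReal (x ^ β * rho ν x)
      = ENNReal.ofReal (Gamma (β + 1) * Gamma (ν + β + 1)) := by
  have hΓ : 0 ≤ Gamma (β + 1) := (Gamma_pos_of_pos (by linarith)).le
  have h_rho : ∀ x ∈ Ioi (0 : ℝ), ENNReal.ofReal (x ^ β * rho ν x)
      = ∫⁻ t in Ioi 0, ENNReal.ofReal (x ^ β * (t ^ (ν - 1) * exp (-t - x / t))) := by
    intro x (hx : 0 < x)
    rw [rho, ← integral_const_mul, setLIntegral_ofReal_eq_ofReal_setIntegral measurableSet_Ioi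
      ((integrableOn_rho_integrand ν hx).const_mul _) fun t (ht : 0 < t) ↦ by positivity]
  have h_moment : ∀ t ∈ Ioi (0 : ℝ),
      ∫⁻ x in Ioi 0, ENNReal.ofReal (x ^ β * (t ^ (ν - 1) * exp (-t - x / t)))
        = ENNReal.ofReal (Gamma (β + 1) * (exp (-t) * t ^ (ν + β + 1 - 1))) := by
    intro t (ht : 0 < t)
    have h_split : ∀ x, x ^ β * (t ^ (ν - 1) * exp (-t - x / t))
        = t ^ (ν - 1) * exp (-t) * (x ^ β * exp (-(x / t))) := fun x ↦ by
      rw [sub_eq_add_neg (-t), exp_add]; ring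
    simp_rw [h_split]
    rw [setLIntegral_ofReal_eq_ofReal_setIntegral measurableSet_Ioi
      ((integrableOn_rpow_mul_exp_neg_div hβ ht).const_mul _) fun x (hx : 0 < x) ↦ by positivity,
      integral_const_mul, integral_rpow_mul_exp_neg_div hβ ht,
      show ν + β + 1 - 1 = (ν - 1) + (β + 1) by ring, rpow_add ht (ν - 1)]
    congr 1
    ring
  calc ∫⁻ x in Ioi 0, ENNReal.ofReal (x ^ β * rho ν x)
      = ∫⁻ x in Ioi 0, ∫⁻ t in Ioi 0,
          ENNReal.ofReal (x ^ β * (t ^ (ν - 1) * exp (-t - x / t))) :=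
        setLIntegral_congr_fun measurableSet_Ioi h_rho
    _ = ∫⁻ t in Ioi 0, ∫⁻ x in Ioi 0,
          ENNReal.ofReal (x ^ β * (t ^ (ν - 1) * exp (-t - x / t))) :=
        lintegral_lintegral_swap (by fun_prop)
    _ = ∫⁻ t in Ioi 0, ENNReal.ofReal (Gamma (β + 1) * (exp (-t) * t ^ (ν + β + 1 - 1))) :=
        setLIntegral_congr_fun measurableSet_Ioi h_moment
    _ = ENNReal.ofReal (Gamma (β + 1) * Gamma (ν + β + 1)) := by
      rw [setLIntegral_ofReal_eq_ofReal_setIntegral measurableSet_Ioi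
        ((GammaIntegral_convergent hνβ).const_mul _) fun t (ht : 0 < t) ↦ by positivity,
        integral_const_mul, Gamma_eq_integral hνβ]

lemma integrableOn_rpow_mul_rho {ν β : ℝ} (hβ : -1 < β) (hνβ : 0 < ν + β + 1) :
    IntegrableOn (fun x ↦ x ^ β * rho ν x) (Ioi 0) := by
  refine ⟨(by fun_prop : Measurable fun x : ℝ ↦ x ^ β).stronglyMeasurable.mul
    (stronglyMeasurable_rho ν) |>.aestronglyMeasurable, ?_⟩
  rw [hasFiniteIntegral_iff_ofReal (ae_restrict_of_forall_mem measurableSet_Ioi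
    fun x (hx : 0 < x) ↦ mul_nonneg (by positivity) (rho_nonneg ν x)),
    lintegral_rpow_mul_rho hβ hνβ]
  exact ENNReal.ofReal_lt_top

lemma integral_rpow_mul_rho {ν β : ℝ} (hβ : -1 < β) (hνβ : 0 < ν + β + 1) :
    ∫ x in Ioi 0, x ^ β * rho ν x = Gamma (β + 1) * Gamma (ν + β + 1) := by
  have h := lintegral_rpow_mul_rho (ν := ν) hβ hνβ
  rw [setLIntegral_ofReal_eq_ofReal_setIntegral measurableSet_Ioi
    (integrableOn_rpow_mul_rho hβ hνβ) fun x (hx : 0 < x) ↦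
      mul_nonneg (by positivity) (rho_nonneg ν x)] at h
  exact (ENNReal.ofReal_eq_ofReal_iff
    (setIntegral_nonneg measurableSet_Ioi fun x (hx : 0 < x) ↦
      mul_nonneg (by positivity) (rho_nonneg ν x))
    (mul_nonneg (Gamma_pos_of_pos (by linarith)).le (Gamma_pos_of_pos hνβ).le)).mp h

lemma integral_eval_mul_rpow_mul_rho {ν α : ℝ} (hα : -1 < α) (hνα : 0 < ν + α + 1)
    (Q : Polynomial ℝ) :
    ∫ x in Ioi 0, Q.eval x * x ^ α * rho ν x
      = ∑ j ∈ Finset.range (Q.natDegree + 1),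
          Q.coeff j * (Gamma (α + j + 1) * Gamma (ν + (α + j) + 1)) := by
  have hαj : ∀ j : ℕ, -1 < α + j := fun j ↦ by have := j.cast_nonneg (α := ℝ); linarith
  have hναj : ∀ j : ℕ, 0 < ν + (α + j) + 1 := fun j ↦ by
    have := j.cast_nonneg (α := ℝ); linarith
  calc ∫ x in Ioi 0, Q.eval x * x ^ α * rho ν x
      = ∫ x in Ioi 0, ∑ j ∈ Finset.range (Q.natDegree + 1),
          Q.coeff j * (x ^ (α + j) * rho ν x) := by
        refine setIntegral_congr_fun measurableSet_Ioi fun x (hx : 0 < x) ↦ ?_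
        rw [Polynomial.eval_eq_sum_range, Finset.sum_mul, Finset.sum_mul]
        refine Finset.sum_congr rfl fun j _ ↦ ?_
        rw [rpow_add hx, rpow_natCast]
        ring
    _ = _ := by
      rw [integral_finsetSum _ fun j _ ↦
        (integrableOn_rpow_mul_rho (hαj j) (hναj j)).const_mul _]
      simp_rw [integral_const_mul, integral_rpow_mul_rho (hαj _) (hναj _)]

lemma integral_mul_polyThetaApply {ν α : ℝ} (hνα : 0 < ν + α + 1) (Q : Polynomial ℝ) :
    ∫ t in Ioi 0, t ^ ν * exp (-t) * polyThetaApply Q α t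
      = ∑ j ∈ Finset.range (Q.natDegree + 1),
          Q.coeff j * (Gamma (1 + α + j) / Gamma (1 + α)) * Gamma (ν + (α + j) + 1) := by
  have hναj : ∀ j : ℕ, 0 < ν + (α + j) + 1 := fun j ↦ by
    have := j.cast_nonneg (α := ℝ); linarith
  calc ∫ t in Ioi 0, t ^ ν * exp (-t) * polyThetaApply Q α t
      = ∫ t in Ioi 0, ∑ j ∈ Finset.range (Q.natDegree + 1),
          Q.coeff j * (Gamma (1 + α + j) / Gamma (1 + α))
            * (exp (-t) * t ^ (ν + (α + j) + 1 - 1)) := by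
        refine setIntegral_congr_fun measurableSet_Ioi fun t (ht : 0 < t) ↦ ?_
        rw [polyThetaApply, Finset.mul_sum]
        refine Finset.sum_congr rfl fun j _ ↦ ?_
        rw [add_sub_cancel_right, rpow_add ht ν]
        ring
    _ = _ := by
      rw [integral_finsetSum _ fun j _ ↦ (GammaIntegral_convergent (hναj j)).const_mul _]
      simp_rw [integral_const_mul, Gamma_eq_integral (hναj _)]

lemma integral_eval_mul_rpow_mul_rho_eq_Gamma_mul {ν α : ℝ} (hα : -1 < α)
    (hνα : 0 < ν + α + 1) (Q : Polynomial ℝ) :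
    ∫ x in Ioi 0, Q.eval x * x ^ α * rho ν x
      = Gamma (1 + α) * ∫ t in Ioi 0, t ^ ν * exp (-t) * polyThetaApply Q α t := by
  have hΓ : Gamma (1 + α) ≠ 0 := (Gamma_pos_of_pos (by linarith)).ne'
  rw [integral_eval_mul_rpow_mul_rho hα hνα, integral_mul_polyThetaApply hνα, Finset.mul_sum]
  refine Finset.sum_congr rfl fun j _ ↦ ?_
  rw [add_right_comm α, add_comm α 1]
  field_simp

theorem prudnikov_orthogonality_iff_composition_orthogonality_general
    (ν α : ℝ) (hν : 0 ≤ ν) (hα : -1 < α) (P : ℕ → Polynomial ℝ) :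
    (∀ n m : ℕ,
        ∫ x in Ioi (0:ℝ), (P n).eval x * (P m).eval x * x ^ α * rho ν x
          = if n = m then 1 else 0)
      ↔ (∀ n m : ℕ,
        ∫ t in Ioi (0:ℝ), t ^ ν * Real.exp (-t) * polyThetaApply (P m * P n) α t
          = (if n = m then 1 else 0) / Real.Gamma (1 + α)) := by
  have hΓ : Gamma (1 + α) ≠ 0 := (Gamma_pos_of_pos (by linarith)).ne'
  have h_eq : ∀ n m : ℕ,
      ∫ x in Ioi (0:ℝ), (P n).eval x * (P m).eval x * x ^ α * rho ν x
        = Gamma (1 + α) * ∫ t in Ioi 0, t ^ ν * exp (-t) * polyThetaApply (P m * P n) α t := by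
    intro n m
    rw [← integral_eval_mul_rpow_mul_rho_eq_Gamma_mul hα (by linarith)]
    simp_rw [Polynomial.eval_mul, mul_comm ((P m).eval _)]
  simp_rw [h_eq, eq_div_iff hΓ, mul_comm (Gamma (1 + α))]

theorem prudnikov_orthogonality_iff_composition_orthogonality
    (ν α : ℝ) (hν : 0 ≤ ν) (hα : -1 < α) (P : ℕ → Polynomial ℝ)
    (hdeg : ∀ n, (P n).natDegree = n) :
    (∀ n m : ℕ,
        ∫ x in Ioi (0:ℝ), (P n).eval x * (P m).eval x * x ^ α * rho ν x
          = if n = m then 1 else 0)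
      ↔ (∀ n m : ℕ,
        ∫ t in Ioi (0:ℝ), t ^ ν * Real.exp (-t) * polyThetaApply (P m * P n) α t
          = (if n = m then 1 else 0) / Real.Gamma (1 + α)) :=
  prudnikov_orthogonality_iff_composition_orthogonality_general ν α hν hα P
end
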